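/- Fix ε, J₁, J₂ ∈ ℝ and define the following ℂ-linear operators on the polynomial ring ℂ[X]: L₁p = p′; L₂p = i(p′ + εXp); L₃p = i(X p′ + (ε/2)X²p + J₁p); L₄p = iJ₂ p, where p′ denotes the formal derivative and i = √−1. Then these operators realize the λ-representation of the one-dimensional central extension of e(2) ⊕ ℝ by the 2-cocycle e¹∧e² (rescaled by ε): [L₁,L₂] = iε·id, [L₁,L₃] = L₂, [L₂,L₃] = −L₁, and [Lₐ,L₄] = 0 for a = 1, 2, 3, where [A,B] = AB − BA. -/

import Mathlib

/-!
The canonical commutation relation `[∂, X] = 1`, in the forms `∂(X p) = p + X ∂p` and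
`∂(X² p) = 2 X p + X² ∂p`, together with `i² = -1`, gives the three brackets among `ℓ₁, ℓ₂, ℓ₃`.
The operator `ℓ₄` is a scalar, so it commutes with the ℂ-linear operators `ℓ₁, ℓ₂, ℓ₃`.
-/

noncomputable section

open Polynomial

/-- The λ-representation operator `ℓ₁ = ∂_q` on `ℂ[X]`. -/
def L1 (p : ℂ[X]) : ℂ[X] := derivative p

/-- The λ-representation operator `ℓ₂ = i(∂_q + εq)` on `ℂ[X]`. -/
def L2 (ε : ℝ) (p : ℂ[X]) : ℂ[X] :=
  Complex.I • (derivative p + (ε : ℂ) • (X * p))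

/-- The λ-representation operator `ℓ₃ = i(q∂_q + (ε/2)q² + J₁)` on `ℂ[X]`. -/
def L3 (ε J₁ : ℝ) (p : ℂ[X]) : ℂ[X] :=
  Complex.I • (X * derivative p + ((ε : ℂ) / 2) • (X ^ 2 * p) + (J₁ : ℂ) • p)

/-- The λ-representation operator `ℓ₄ = iJ₂` on `ℂ[X]`. -/
def L4 (J₂ : ℝ) (p : ℂ[X]) : ℂ[X] := (Complex.I * (J₂ : ℂ)) • p


namespace Polynomial

theorem derivative_X_mul {R : Type*} [CommSemiring R] (p : R[X]) :
    derivative (X * p) = p + X * derivative p := by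
  rw [derivative_mul, derivative_X, one_mul]

theorem derivative_X_sq_mul {R : Type*} [CommSemiring R] (p : R[X]) :
    derivative (X ^ 2 * p) = (2 : R) • (X * p) + X ^ 2 * derivative p := by
  rw [derivative_mul, derivative_X_sq, mul_assoc, smul_eq_C_mul]

end Polynomial

theorem L1_smul (c : ℂ) (p : ℂ[X]) : L1 (c • p) = c • L1 p := derivative_smul c p

theorem L2_smul (ε : ℝ) (c : ℂ) (p : ℂ[X]) : L2 ε (c • p) = c • L2 ε p := by
  simp only [L2, derivative_smul, mul_smul_comm, smul_comm _ c, ← smul_add]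

theorem L3_smul (ε J₁ : ℝ) (c : ℂ) (p : ℂ[X]) : L3 ε J₁ (c • p) = c • L3 ε J₁ p := by
  simp only [L3, derivative_smul, mul_smul_comm, smul_comm _ c, ← smul_add]

theorem L1_L2_sub_L2_L1 (ε : ℝ) (p : ℂ[X]) :
    L1 (L2 ε p) - L2 ε (L1 p) = (Complex.I * (ε : ℂ)) • p := by
  simp only [L1, L2, derivative_smul, derivative_add, derivative_X_mul]
  module

theorem L1_L3_sub_L3_L1 (ε J₁ : ℝ) (p : ℂ[X]) :
    L1 (L3 ε J₁ p) - L3 ε J₁ (L1 p) = L2 ε p := by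
  simp only [L1, L2, L3, derivative_smul, derivative_add, derivative_X_mul, derivative_X_sq_mul]
  module

theorem L2_L3_sub_L3_L2 (ε J₁ : ℝ) (p : ℂ[X]) :
    L2 ε (L3 ε J₁ p) - L3 ε J₁ (L2 ε p) = -L1 p := by
  -- `module` compares atoms syntactically, so `X * (X ^ 2 * p)` is rewritten to `X ^ 2 * (X * p)`.
  simp only [L1, L2, L3, derivative_smul, derivative_add, derivative_X_mul, derivative_X_sq_mul,
    mul_smul_comm, mul_add, mul_left_comm X (X ^ 2)]
  linear_combination (norm := module) Complex.I_mul_I • derivative p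

/-- the operators `ℓ₁, ℓ₂, ℓ₃, ℓ₄` realize the λ-representation of the
one-dimensional central extension of `e(2) ⊕ ℝ` by the 2-cocycle `e¹∧e²` (rescaled
by the charge `ε`): `[ℓ₁,ℓ₂] = iε·id`, `[ℓ₁,ℓ₃] = ℓ₂`, `[ℓ₂,ℓ₃] = −ℓ₁`,
`[ℓₐ,ℓ₄] = 0` for `a = 1,2,3`. -/
theorem lambda_representation_commutators (ε J₁ J₂ : ℝ) :
    (∀ p : ℂ[X], L1 (L2 ε p) - L2 ε (L1 p) = (Complex.I * (ε : ℂ)) • p) ∧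
    (∀ p : ℂ[X], L1 (L3 ε J₁ p) - L3 ε J₁ (L1 p) = L2 ε p) ∧
    (∀ p : ℂ[X], L2 ε (L3 ε J₁ p) - L3 ε J₁ (L2 ε p) = -L1 p) ∧
    (∀ p : ℂ[X], L1 (L4 J₂ p) - L4 J₂ (L1 p) = 0) ∧
    (∀ p : ℂ[X], L2 ε (L4 J₂ p) - L4 J₂ (L2 ε p) = 0) ∧
    (∀ p : ℂ[X], L3 ε J₁ (L4 J₂ p) - L4 J₂ (L3 ε J₁ p) = 0) := by
  exact ⟨L1_L2_sub_L2_L1 ε, L1_L3_sub_L3_L1 ε J₁, L2_L3_sub_L3_L2 ε J₁,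
    fun p => sub_eq_zero.2 (L1_smul _ p), fun p => sub_eq_zero.2 (L2_smul ε _ p),
    fun p => sub_eq_zero.2 (L3_smul ε J₁ _ p)⟩
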